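/- arXiv:1609.06961 — 6 statements merged into one kernel-verified Lean document; each statement's English description precedes it below -/
import Mathlib

section
/- A graph G is localizable (its vertex set can be partitioned into strong cliques) if and only if its vertex set can be partitioned into exactly α(G) strong cliques, where α(G) is the independence number. -/
variable {V : Type*} [Fintype V] [DecidableEq V]

/-- `S` is an independent set in `G`. -/
def IsIndep (G : SimpleGraph V) (S : Finset V) : Prop :=
  ∀ ⦃u⦄, u ∈ S → ∀ ⦃v⦄, v ∈ S → ¬ G.Adj u v

/-- `S` is a maximal independent set in `G`. -/
def MaxIndep (G : SimpleGraph V) (S : Finset V) : Prop :=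
  IsIndep G S ∧ ∀ T, IsIndep G T → S ⊆ T → T = S

/-- `C` is a strong clique in `G`: a clique meeting every maximal independent set. -/
def IsStrongClique (G : SimpleGraph V) (C : Finset V) : Prop :=
  G.IsClique ↑C ∧ ∀ S, MaxIndep G S → (C ∩ S).Nonempty

/-- `G` is localizable: its vertex set partitions into strong cliques. -/
def Localizable (G : SimpleGraph V) : Prop :=
  ∃ (k : ℕ) (C : Fin k → Finset V), (∀ j, IsStrongClique G (C j)) ∧ ∀ v, ∃! j, v ∈ C j

/-- The independence number `α(G)`. -/
noncomputable def alpha (G : SimpleGraph V) : ℕ :=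
  sSup {n | ∃ S : Finset V, IsIndep G S ∧ S.card = n}

/-- The independent domination number `i(G)`. -/
noncomputable def indomNum (G : SimpleGraph V) : ℕ :=
  sInf {n | ∃ S : Finset V, MaxIndep G S ∧ S.card = n}

/-- The clique cover number `θ(G)`. -/
noncomputable def theta (G : SimpleGraph V) : ℕ :=
  sInf {n | ∃ C : Fin n → Finset V, (∀ j, G.IsClique ↑(C j)) ∧ ∀ v, ∃! j, v ∈ C j}

/-- `G` is well-covered: all maximal independent sets have the same size. -/
def WellCovered (G : SimpleGraph V) : Prop :=
  ∀ S T, MaxIndep G S → MaxIndep G T → S.card = T.card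

/-!
A strong clique meets every maximal independent set in exactly one vertex: in at least one by
strength, in at most one because it is a clique. Hence every partition into strong cliques has
exactly as many parts as any maximal independent set has vertices, and a maximum independent set
is maximal, of size `α(G)`.
-/

open Finset

omit [DecidableEq V] in
lemma exists_maxIndep_card_eq_alpha (G : SimpleGraph V) :
    ∃ S : Finset V, MaxIndep G S ∧ S.card = alpha G := by
  set sizes := {n | ∃ S : Finset V, IsIndep G S ∧ S.card = n}
  have hbdd : BddAbove sizes := ⟨Fintype.card V, by rintro _ ⟨S, -, rfl⟩; exact card_le_univ S⟩
  have hne : sizes.Nonempty := ⟨0, ∅, by simp [IsIndep], rfl⟩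
  obtain ⟨S, hS, hSα⟩ := Nat.sSup_mem hne hbdd
  refine ⟨S, ⟨hS, fun T hT hST => ?_⟩, hSα⟩
  have hTα : T.card ≤ alpha G := le_csSup hbdd ⟨T, hT, rfl⟩
  exact (eq_of_subset_of_card_le hST (hSα ▸ hTα)).symm

section

variable {G : SimpleGraph V}

omit [Fintype V] in
lemma card_inter_le_one_of_isClique_of_isIndep {C S : Finset V} (hC : G.IsClique (C : Set V))
    (hS : IsIndep G S) : (C ∩ S).card ≤ 1 :=
  card_le_one.2 fun _ ha _ hb => by
    by_contra hab
    exact hS (mem_inter.1 ha).2 (mem_inter.1 hb).2 (hC (mem_inter.1 ha).1 (mem_inter.1 hb).1 hab)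

omit [Fintype V] in
lemma IsStrongClique.card_inter_eq_one {C S : Finset V} (hC : IsStrongClique G C)
    (hS : MaxIndep G S) : (C ∩ S).card = 1 :=
  le_antisymm (card_inter_le_one_of_isClique_of_isIndep hC.1 hS.1) (card_pos.2 (hC.2 S hS))

omit [Fintype V] in
lemma MaxIndep.card_eq_of_strongClique_partition {S : Finset V} (hS : MaxIndep G S) {k : ℕ}
    {C : Fin k → Finset V} (hC : ∀ j, IsStrongClique G (C j)) (hpart : ∀ v, ∃! j, v ∈ C j) :
    S.card = k := by
  choose part hpart hpart_unique using hpart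
  have hfiber : ∀ j, {v ∈ S | part v = j} = C j ∩ S := by
    intro j
    ext v
    simp only [mem_filter, mem_inter]
    constructor
    · rintro ⟨hv, rfl⟩
      exact ⟨hpart v, hv⟩
    · rintro ⟨hvC, hv⟩
      exact ⟨hv, (hpart_unique v j hvC).symm⟩
  calc S.card = ∑ j, {v ∈ S | part v = j}.card :=
        card_eq_sum_card_fiberwise fun v _ => mem_coe.2 (mem_univ (part v))
    _ = ∑ _j : Fin k, 1 := by simp only [hfiber, (hC _).card_inter_eq_one hS]
    _ = k := by simp

end

theorem localizable_iff_alpha_localizable (G : SimpleGraph V) :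
    Localizable G ↔
      ∃ C : Fin (alpha G) → Finset V,
        (∀ j, IsStrongClique G (C j)) ∧ ∀ v, ∃! j, v ∈ C j := by
  constructor
  · rintro ⟨k, C, hC, hpart⟩
    obtain ⟨S, hS, hSα⟩ := exists_maxIndep_card_eq_alpha G
    obtain rfl : k = alpha G := (hS.card_eq_of_strongClique_partition hC hpart).symm.trans hSα
    exact ⟨C, hC, hpart⟩
  · rintro ⟨C, hC, hpart⟩
    exact ⟨alpha G, C, hC, hpart⟩
end

section
/- A graph G is localizable if and only if i(G) = θ(G), where i(G) is the minimum size of a maximal independent set and θ(G) is the clique cover number. -/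
variable {V : Type*} [Fintype V] [DecidableEq V]

/-! An independent set meets each part of a clique partition in at most one vertex, so its size
is at most the number of parts, with equality exactly when it meets every part. If the parts are
strong cliques, every maximal independent set therefore has as many vertices as there are parts,
which squeezes `i(G) ≤ θ(G)` into an equality. Conversely, if `i(G) = θ(G)`, every maximal
independent set has `θ(G)` vertices, so it meets every part of a minimum clique partition, and
those parts are strong cliques. -/

def IsCliquePartition (G : SimpleGraph V) {k : ℕ} (C : Fin k → Finset V) : Prop :=
  (∀ j, G.IsClique ↑(C j)) ∧ ∀ v, ∃! j, v ∈ C j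

omit [Fintype V] in
lemma card_eq_sum_card_inter_of_existsUnique {k : ℕ} {C : Fin k → Finset V}
    (hpart : ∀ v, ∃! j, v ∈ C j) (S : Finset V) : S.card = ∑ j, (C j ∩ S).card := by
  choose part hpart_mem hpart_unique using hpart
  rw [Finset.card_eq_sum_card_fiberwise (f := part) (t := Finset.univ)
    fun _ _ => Finset.mem_univ _]
  refine Finset.sum_congr rfl fun j _ => congrArg Finset.card ?_
  ext v
  simp only [Finset.mem_filter, Finset.mem_inter]
  constructor
  · rintro ⟨hv, rfl⟩
    exact ⟨hpart_mem v, hv⟩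
  · rintro ⟨hvj, hv⟩
    exact ⟨hv, (hpart_unique v j hvj).symm⟩

namespace IsIndep

variable {G : SimpleGraph V} {S : Finset V} {k : ℕ} {C : Fin k → Finset V}

omit [Fintype V] in
lemma card_inter_clique_le_one {K : Finset V} (hS : IsIndep G S) (hK : G.IsClique ↑K) :
    (K ∩ S).card ≤ 1 :=
  Finset.card_le_one.mpr fun _ ha _ hb => by
    rw [Finset.mem_inter] at ha hb
    by_contra hne
    exact hS ha.2 hb.2 (hK ha.1 hb.1 hne)

omit [Fintype V] in
lemma card_le_of_isCliquePartition (hS : IsIndep G S) (hC : IsCliquePartition G C) :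
    S.card ≤ k :=
  calc S.card = ∑ j, (C j ∩ S).card := card_eq_sum_card_inter_of_existsUnique hC.2 S
    _ ≤ ∑ _j : Fin k, 1 := Finset.sum_le_sum fun j _ => hS.card_inter_clique_le_one (hC.1 j)
    _ = k := by simp

omit [Fintype V] in
lemma card_eq_iff_forall_inter_nonempty (hS : IsIndep G S) (hC : IsCliquePartition G C) :
    S.card = k ↔ ∀ j, (C j ∩ S).Nonempty := by
  have hle : ∀ j ∈ Finset.univ, (C j ∩ S).card ≤ 1 :=
    fun j _ => hS.card_inter_clique_le_one (hC.1 j)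
  have hsum : S.card = k ↔ ∑ j, (C j ∩ S).card = ∑ _j : Fin k, 1 := by
    rw [← card_eq_sum_card_inter_of_existsUnique hC.2 S]
    simp
  rw [hsum, Finset.sum_eq_sum_iff_of_le hle]
  refine forall_congr' fun j => ?_
  rw [← Finset.card_pos]
  exact ⟨fun h => (h (Finset.mem_univ j)).symm ▸ one_pos,
    fun h _ => le_antisymm (hle j (Finset.mem_univ j)) h⟩

end IsIndep

section

variable (G : SimpleGraph V)

omit [DecidableEq V] in
lemma exists_maxIndep : ∃ S, MaxIndep G S := by
  classical
  obtain ⟨S, hS, hmax⟩ := Finset.exists_max_image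
    (Finset.univ.filter (IsIndep G)) Finset.card
    ⟨∅, Finset.mem_filter.mpr ⟨Finset.mem_univ _, fun _ h => absurd h (Finset.notMem_empty _)⟩⟩
  refine ⟨S, (Finset.mem_filter.mp hS).2, fun T hT hST => ?_⟩
  exact (Finset.eq_of_subset_of_card_le hST (hmax T (by simpa using hT))).symm

omit [Fintype V] [DecidableEq V] in
lemma indomNum_le_card {S : Finset V} (hS : MaxIndep G S) : indomNum G ≤ S.card :=
  Nat.sInf_le ⟨S, hS, rfl⟩

omit [DecidableEq V] in
lemma exists_maxIndep_card_eq_indomNum : ∃ S, MaxIndep G S ∧ S.card = indomNum G :=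
  have ⟨S, hS⟩ := exists_maxIndep G
  Nat.sInf_mem (s := {n | ∃ S, MaxIndep G S ∧ S.card = n}) ⟨_, S, hS, rfl⟩

omit [Fintype V] [DecidableEq V] in
lemma theta_le_of_isCliquePartition {k : ℕ} {C : Fin k → Finset V}
    (hC : IsCliquePartition G C) : theta G ≤ k :=
  Nat.sInf_le ⟨C, hC⟩

omit [DecidableEq V] in
lemma exists_isCliquePartition_theta : ∃ C : Fin (theta G) → Finset V, IsCliquePartition G C := by
  refine Nat.sInf_mem (s := {n | ∃ C : Fin n → Finset V, IsCliquePartition G C})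
    ⟨Fintype.card V, fun j => {(Fintype.equivFin V).symm j}, fun j => by simp,
      fun v => ⟨Fintype.equivFin V v, by simp, fun j hj => ?_⟩⟩
  rw [Finset.mem_singleton.mp hj, Equiv.apply_symm_apply]

lemma indomNum_le_theta : indomNum G ≤ theta G := by
  obtain ⟨S, hS⟩ := exists_maxIndep G
  obtain ⟨C, hC⟩ := exists_isCliquePartition_theta G
  exact (indomNum_le_card G hS).trans (hS.1.card_le_of_isCliquePartition hC)

end

theorem localizable_iff_indomNum_eq_theta (G : SimpleGraph V) :
    Localizable G ↔ indomNum G = theta G := by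
  constructor
  · rintro ⟨k, C, hstrong, hpart⟩
    have hC : IsCliquePartition G C := ⟨fun j => (hstrong j).1, hpart⟩
    obtain ⟨S, hS, hSi⟩ := exists_maxIndep_card_eq_indomNum G
    have hSk : S.card = k :=
      (hS.1.card_eq_iff_forall_inter_nonempty hC).mpr fun j => (hstrong j).2 S hS
    have hθk := theta_le_of_isCliquePartition G hC
    have hiθ := indomNum_le_theta G
    omega
  · intro h
    obtain ⟨C, hC⟩ := exists_isCliquePartition_theta G
    refine ⟨theta G, C, fun j => ⟨hC.1 j, fun S hS => ?_⟩, hC.2⟩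
    have hθS : theta G ≤ S.card := h ▸ indomNum_le_card G hS
    exact (hS.1.card_eq_iff_forall_inter_nonempty hC).mp
      (le_antisymm (hS.1.card_le_of_isCliquePartition hC) hθS) j
end

section
/- Let G be a graph and uv an edge of G. Then {u,v} is a strong clique in G if and only if uv is not contained in any triangle and every vertex of N(u) is adjacent to every vertex of N(v). -/
variable {V : Type*} [Fintype V] [DecidableEq V]

/-
A clique `C` is strong exactly when every independent set `T` leaves some vertex of `C` with no
neighbour in `T`: extend `T` to a maximal independent set, which must meet `C`; conversely a vertex
of `C` with no neighbour in a maximal independent set lies in it. For `C = {u, v}` an edge, the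
independent sets `{w}` with `w` a common neighbour, and `{x, y}` with `x ∈ N(u)`, `y ∈ N(v)`
non-adjacent, are exactly the obstructions.
-/

section

variable {G : SimpleGraph V}

omit [Fintype V] in
lemma isIndep_insert {S : Finset V} {a : V} :
    IsIndep G (insert a S) ↔ IsIndep G S ∧ ∀ x ∈ S, ¬ G.Adj a x := by
  constructor
  · intro h
    exact ⟨fun x hx y hy => h (Finset.mem_insert_of_mem hx) (Finset.mem_insert_of_mem hy),
      fun x hx => h (Finset.mem_insert_self a S) (Finset.mem_insert_of_mem hx)⟩
  · rintro ⟨hS, ha⟩ x hx y hy hxy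
    rw [Finset.mem_insert] at hx hy
    rcases hx with rfl | hx <;> rcases hy with rfl | hy
    · exact G.irrefl hxy
    · exact ha _ hy hxy
    · exact ha _ hx hxy.symm
    · exact hS hx hy hxy

omit [Fintype V] [DecidableEq V] in
lemma isIndep_singleton (a : V) : IsIndep G {a} := by
  rintro x hx y hy
  rw [Finset.mem_singleton] at hx hy
  subst hx hy
  exact G.irrefl

omit [Fintype V] in
lemma isIndep_pair {a b : V} (hab : ¬ G.Adj a b) : IsIndep G {a, b} :=
  isIndep_insert.mpr ⟨isIndep_singleton b, by simpa using hab⟩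

lemma exists_maxIndep_superset {S : Finset V} (hS : IsIndep G S) : ∃ T, MaxIndep G T ∧ S ⊆ T := by
  classical
  have hne : (Finset.univ.powerset.filter fun T => IsIndep G T ∧ S ⊆ T).Nonempty :=
    ⟨S, by simp [hS]⟩
  obtain ⟨T, hT, hmax⟩ := Finset.exists_max_image _ Finset.card hne
  simp only [Finset.mem_filter] at hT
  refine ⟨T, ⟨hT.2.1, fun T' hT' hTT' => ?_⟩, hT.2.2⟩
  have hmem : T' ∈ Finset.univ.powerset.filter fun T => IsIndep G T ∧ S ⊆ T := by
    simp [hT', hT.2.2.trans hTT']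
  exact (Finset.eq_of_subset_of_card_le hTT' (hmax T' hmem)).symm

omit [Fintype V] in
lemma MaxIndep.mem_of_forall_not_adj {S : Finset V} (hS : MaxIndep G S) {a : V}
    (ha : ∀ x ∈ S, ¬ G.Adj a x) : a ∈ S := by
  rw [← hS.2 _ (isIndep_insert.mpr ⟨hS.1, ha⟩) (Finset.subset_insert a S)]
  exact Finset.mem_insert_self a S

lemma isStrongClique_iff_forall_isIndep {C : Finset V} :
    IsStrongClique G C ↔
      G.IsClique ↑C ∧ ∀ T, IsIndep G T → ∃ c ∈ C, ∀ t ∈ T, ¬ G.Adj c t := by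
  refine and_congr_right fun _ => ⟨fun hstrong T hT => ?_, fun hindep S hS => ?_⟩
  · obtain ⟨S, hS, hTS⟩ := exists_maxIndep_superset hT
    obtain ⟨c, hc⟩ := hstrong S hS
    rw [Finset.mem_inter] at hc
    exact ⟨c, hc.1, fun t ht => hS.1 hc.2 (hTS ht)⟩
  · obtain ⟨c, hcC, hc⟩ := hindep S hS.1
    exact ⟨c, Finset.mem_inter.mpr ⟨hcC, hS.mem_of_forall_not_adj hc⟩⟩

end

theorem strong_edge_iff (G : SimpleGraph V) (u v : V) (huv : G.Adj u v) :
    IsStrongClique G {u, v} ↔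
      (∀ w, ¬ (G.Adj u w ∧ G.Adj v w)) ∧
        ∀ x y, G.Adj u x → G.Adj v y → G.Adj x y := by
  simp only [isStrongClique_iff_forall_isIndep, Finset.coe_pair, SimpleGraph.isClique_pair,
    Finset.exists_mem_insert, Finset.mem_singleton, exists_eq_left, huv, implies_true, true_and]
  constructor
  · intro hstrong
    refine ⟨fun w ⟨huw, hvw⟩ => ?_, fun x y hux hvy => ?_⟩
    · rcases hstrong {w} (isIndep_singleton w) with h | h
      · exact h w (Finset.mem_singleton_self w) huw
      · exact h w (Finset.mem_singleton_self w) hvw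
    · by_contra hxy
      rcases hstrong {x, y} (isIndep_pair hxy) with h | h
      · exact h x (by simp) hux
      · exact h y (by simp) hvy
  · rintro ⟨htriangle, hcomplete⟩ T hT
    by_contra! hadj
    obtain ⟨⟨x, hxT, hux⟩, ⟨y, hyT, hvy⟩⟩ := hadj
    rcases eq_or_ne x y with rfl | hxy
    · exact htriangle x ⟨hux, hvy⟩
    · exact hT hxT hyT (hcomplete x y hux hvy)
end

section
/- A C4-free graph G is localizable if and only if each vertex of G is contained in exactly one simplicial clique. -/
variable {V : Type*} [Fintype V] [DecidableEq V]

/-- `G` has no induced cycle on four vertices. -/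
def C4Free (G : SimpleGraph V) : Prop :=
  ¬ ∃ a b c d : V, a ≠ c ∧ b ≠ d ∧ G.Adj a b ∧ G.Adj b c ∧ G.Adj c d ∧ G.Adj d a ∧
      ¬ G.Adj a c ∧ ¬ G.Adj b d

/-! A maximal independent set meets every closed neighbourhood, so simplicial cliques are strong.
Conversely, let `C` be a strong clique of a C4-free graph. Two adjacent vertices outside `C` have
comparable neighbourhoods in `C` (otherwise they close an induced C4 through `C`), so an
inclusion-minimal set of outside vertices dominating `C` is independent. A maximal independent set
containing it would miss `C`; hence some `c ∈ C` has no neighbour outside `C`, and `C = N[c]`.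
Finally, simplicial cliques `N[w]` and `N[z]` with `w ∈ N[z]` coincide, so a partition into strong,
hence simplicial, cliques contains every simplicial clique as a part. -/

def closedNbhd (G : SimpleGraph V) [DecidableRel G.Adj] (w : V) : Finset V :=
  insert w (G.neighborFinset w)

def IsSimplicialClique (G : SimpleGraph V) [DecidableRel G.Adj] (C : Finset V) : Prop :=
  G.IsClique ↑C ∧ ∃ w, C = closedNbhd G w

section

variable {G : SimpleGraph V} {C S : Finset V}

lemma IsStrongClique.exists_forall_not_adj (hC : IsStrongClique G C) (hS : IsIndep G S) :
    ∃ c ∈ C, ∀ s ∈ S, ¬ G.Adj c s := by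
  obtain ⟨T, hST, hT⟩ := Finite.exists_le_maximal (p := IsIndep G) hS
  obtain ⟨c, hc⟩ := hC.2 T ⟨hT.prop, fun T' hT' hTT' => (hT.eq_of_le hT' hTT').symm⟩
  rw [Finset.mem_inter] at hc
  exact ⟨c, hc.1, fun s hs hcs => hT.prop hc.2 (hST hs) hcs⟩

lemma localizable_of_existsUnique {P : Finset V → Prop} (hP : ∀ C, P C → IsStrongClique G C)
    (h : ∀ v, ∃! C, P C ∧ v ∈ C) : Localizable G := by
  obtain ⟨k, ⟨e⟩⟩ := Finite.exists_equiv_fin {C : Finset V // P C}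
  refine ⟨k, fun j => (e.symm j).1, fun j => hP _ (e.symm j).2, fun v => ?_⟩
  obtain ⟨C, ⟨hC, hvC⟩, huniq⟩ := h v
  refine ⟨e ⟨C, hC⟩, by simpa using hvC, fun j hj => ?_⟩
  rw [← e.symm_apply_eq]
  exact Subtype.ext (huniq _ ⟨(e.symm j).2, hj⟩)

variable [DecidableRel G.Adj]

lemma mem_closedNbhd {w x : V} : x ∈ closedNbhd G w ↔ x = w ∨ G.Adj w x := by
  simp [closedNbhd]

lemma mem_closedNbhd_comm {w x : V} : x ∈ closedNbhd G w ↔ w ∈ closedNbhd G x := by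
  simp only [mem_closedNbhd, eq_comm, G.adj_comm]

lemma subset_closedNbhd_of_isClique (hC : G.IsClique ↑C) {c : V} (hc : c ∈ C) :
    C ⊆ closedNbhd G c := by
  intro x hx
  rcases eq_or_ne x c with rfl | hne
  · exact mem_closedNbhd.2 (Or.inl rfl)
  · exact mem_closedNbhd.2 (Or.inr (hC hc hx hne.symm))

lemma closedNbhd_eq_of_mem {w z : V} (hw : G.IsClique ↑(closedNbhd G w))
    (hz : G.IsClique ↑(closedNbhd G z)) (hwz : w ∈ closedNbhd G z) :
    closedNbhd G w = closedNbhd G z :=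
  (subset_closedNbhd_of_isClique hw (mem_closedNbhd_comm.1 hwz)).antisymm
    (subset_closedNbhd_of_isClique hz hwz)

lemma MaxIndep.closedNbhd_inter_nonempty (hS : MaxIndep G S) (w : V) :
    (closedNbhd G w ∩ S).Nonempty := by
  by_contra h
  have hfree : ∀ x ∈ closedNbhd G w, x ∉ S := fun x hx hxS => h ⟨x, Finset.mem_inter.2 ⟨hx, hxS⟩⟩
  have hind : IsIndep G (insert w S) := by
    intro u hu v hv huv
    rcases Finset.mem_insert.1 hu with rfl | huS <;> rcases Finset.mem_insert.1 hv with rfl | hvS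
    · exact G.irrefl huv
    · exact hfree v (mem_closedNbhd.2 (Or.inr huv)) hvS
    · exact hfree u (mem_closedNbhd.2 (Or.inr huv.symm)) huS
    · exact hS.1 huS hvS huv
  have hwS : w ∈ S := hS.2 _ hind (Finset.subset_insert w S) ▸ Finset.mem_insert_self w S
  exact hfree w (mem_closedNbhd.2 (Or.inl rfl)) hwS

lemma IsSimplicialClique.isStrongClique (hC : IsSimplicialClique G C) : IsStrongClique G C := by
  obtain ⟨hclique, w, rfl⟩ := hC
  exact ⟨hclique, fun S hS => hS.closedNbhd_inter_nonempty w⟩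

lemma IsSimplicialClique.exists_eq_of_cover {ι : Type*} {P : ι → Finset V}
    (hP : ∀ i, IsSimplicialClique G (P i)) (hcover : ∀ v, ∃ i, v ∈ P i)
    (hC : IsSimplicialClique G C) : ∃ i, C = P i := by
  obtain ⟨hCclique, w, rfl⟩ := hC
  obtain ⟨i, hwi⟩ := hcover w
  obtain ⟨hclique, z, hz⟩ := hP i
  rw [hz] at hwi hclique
  exact ⟨i, hz ▸ closedNbhd_eq_of_mem hCclique hclique hwi⟩

lemma C4Free.neighborFinset_inter_subset_or_subset (hG : C4Free G) (hC : G.IsClique ↑C)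
    {u u' : V} (hu : u ∉ C) (hu' : u' ∉ C) (h : G.Adj u u') :
    G.neighborFinset u ∩ C ⊆ G.neighborFinset u' ∩ C ∨
      G.neighborFinset u' ∩ C ⊆ G.neighborFinset u ∩ C := by
  by_contra hcon
  rw [not_or, Finset.not_subset, Finset.not_subset] at hcon
  obtain ⟨⟨a, ha, ha'⟩, ⟨b, hb, hb'⟩⟩ := hcon
  simp only [Finset.mem_inter, SimpleGraph.mem_neighborFinset, not_and] at ha ha' hb hb'
  have hab : a ≠ b := by
    rintro rfl
    exact hb' ha.1 ha.2
  refine hG ⟨a, u, u', b, ?_, ?_, ha.1.symm, h, hb.1, hC hb.2 ha.2 hab.symm,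
    fun h' => ha' h'.symm ha.2, fun h' => hb' h' hb.2⟩
  · rintro rfl
    exact hu' ha.2
  · rintro rfl
    exact hu hb.2

lemma C4Free.isIndep_of_minimal_dominating (hG : C4Free G) (hC : G.IsClique ↑C)
    (hS : Minimal (fun S : Finset V => Disjoint S C ∧ ∀ c ∈ C, ∃ s ∈ S, G.Adj c s) S) :
    IsIndep G S := by
  suffices key : ∀ ⦃s⦄, s ∈ S → ∀ ⦃s'⦄, s' ∈ S → G.Adj s s' →
      ¬ G.neighborFinset s ∩ C ⊆ G.neighborFinset s' ∩ C by
    intro s hs s' hs' h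
    rcases hG.neighborFinset_inter_subset_or_subset hC (Finset.disjoint_left.1 hS.prop.1 hs)
      (Finset.disjoint_left.1 hS.prop.1 hs') h with hsub | hsub
    · exact key hs hs' h hsub
    · exact key hs' hs h.symm hsub
  intro s hs s' hs' h hsub
  have hdom : ∀ c ∈ C, ∃ t ∈ S.erase s, G.Adj c t := by
    intro c hc
    obtain ⟨t, ht, hct⟩ := hS.prop.2 c hc
    by_cases hts : t = s
    · subst hts
      have hcs' := (Finset.mem_inter.1 (hsub (by simpa using ⟨hct.symm, hc⟩))).1
      exact ⟨s', Finset.mem_erase.2 ⟨h.ne.symm, hs'⟩, ((G.mem_neighborFinset _ _).1 hcs').symm⟩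
    · exact ⟨t, Finset.mem_erase.2 ⟨hts, ht⟩, hct⟩
  have hdisj := Finset.disjoint_of_subset_left (Finset.erase_subset s S) hS.prop.1
  exact Finset.notMem_erase s S (hS.2 ⟨hdisj, hdom⟩ (Finset.erase_subset s S) hs)

lemma C4Free.isSimplicialClique_of_isStrongClique (hG : C4Free G) (hC : IsStrongClique G C) :
    IsSimplicialClique G C := by
  suffices ∃ c ∈ C, ∀ x, G.Adj c x → x ∈ C by
    obtain ⟨c, hc, hnbr⟩ := this
    refine ⟨hC.1, c, (subset_closedNbhd_of_isClique hC.1 hc).antisymm fun x hx => ?_⟩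
    rcases mem_closedNbhd.1 hx with rfl | hcx
    exacts [hc, hnbr x hcx]
  by_contra! hout
  obtain ⟨S, -, hS⟩ := Finite.exists_le_minimal
    (p := fun S : Finset V => Disjoint S C ∧ ∀ c ∈ C, ∃ s ∈ S, G.Adj c s) (a := Cᶜ)
    ⟨disjoint_compl_left, fun c hc => by simpa [and_comm] using hout c hc⟩
  obtain ⟨c, hc, hfree⟩ := hC.exists_forall_not_adj (hG.isIndep_of_minimal_dominating hC.1 hS)
  obtain ⟨s, hs, hcs⟩ := hS.prop.2 c hc
  exact hfree s hs hcs

end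

theorem C4Free_localizable_iff_unique_simplicial (G : SimpleGraph V) [DecidableRel G.Adj]
    (hG : C4Free G) :
    Localizable G ↔
      ∀ v : V, ∃! C : Finset V,
        (G.IsClique ↑C ∧ ∃ w, C = insert w (G.neighborFinset w)) ∧ v ∈ C := by
  change Localizable G ↔ ∀ v : V, ∃! C : Finset V, IsSimplicialClique G C ∧ v ∈ C
  constructor
  · rintro ⟨k, P, hstrong, hpart⟩ v
    have hsimp j := hG.isSimplicialClique_of_isStrongClique (hstrong j)
    obtain ⟨j, hvj, hj⟩ := hpart v
    refine ⟨P j, ⟨hsimp j, hvj⟩, fun D ⟨hD, hvD⟩ => ?_⟩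
    obtain ⟨i, rfl⟩ := hD.exists_eq_of_cover hsimp fun w => (hpart w).exists
    rw [hj i hvD]
  · exact localizable_of_existsUnique fun _ hC => hC.isStrongClique
end

section
/- For a bipartite graph H with parts U and W, a vertex u is covered by every maximal matching of H (i.e., u is strong) if and only if there exists a non-empty set X ⊆ N(u) such that |N(X)| ≤ |X|. -/
variable {V : Type*} [Fintype V] [DecidableEq V]

/-- `M` is a matching in `H`: a set of pairwise disjoint edges. -/
def IsMatching (H : SimpleGraph V) (M : Set (Sym2 V)) : Prop :=
  M ⊆ H.edgeSet ∧ ∀ e ∈ M, ∀ f ∈ M, e ≠ f → ∀ v : V, ¬ (v ∈ e ∧ v ∈ f)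

/-- `M` is a maximal matching in `H`. -/
def IsMaximalMatching (H : SimpleGraph V) (M : Set (Sym2 V)) : Prop :=
  IsMatching H M ∧ ∀ M', IsMatching H M' → M ⊆ M' → M' = M

/-- The matching `M` covers the vertex `v`. -/
def MatchCovers (M : Set (Sym2 V)) (v : V) : Prop := ∃ e ∈ M, v ∈ e

/-- A vertex is strong if it is covered by every maximal matching. -/
def StrongVertex (H : SimpleGraph V) (u : V) : Prop :=
  ∀ M, IsMaximalMatching H M → MatchCovers M u

/-- The triangle on vertices `a`, `b`, `c` is strong: every maximal matching
contains one of its edges. -/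
def StrongTriangle (H : SimpleGraph V) (a b c : V) : Prop :=
  ∀ M, IsMaximalMatching H M → ∃ e ∈ M, e = s(a, b) ∨ e = s(b, c) ∨ e = s(a, c)

/-!
A maximal matching that misses `u` must cover every neighbour of `u`; conversely, a matching of
`H - u` saturating `N(u)` extends to a maximal matching, which still misses `u` because each
neighbour of `u` is already matched elsewhere. So `u` is not strong iff `H - u` has a matching
saturating `N(u)`. As `H` is bipartite, `N(u)` is independent, so for `∅ ≠ X ⊆ N(u)` the vertex `u`
lies in `N(X)` and the neighbours of `X` in `H - u` are exactly `N(X) \ {u}`. By Hall's theorem the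
matching exists iff `|X| ≤ |N(X)| - 1` for all such `X`.
-/

section

open SimpleGraph

variable {V : Type*} {H : SimpleGraph V} {M : Set (Sym2 V)} {u : V}

theorem IsMatching.eq_of_mem_of_mem (hM : IsMatching H M) {e f : Sym2 V} (he : e ∈ M)
    (hf : f ∈ M) {v : V} (hve : v ∈ e) (hvf : v ∈ f) : e = f :=
  by_contra fun hne => hM.2 e he f hf hne v ⟨hve, hvf⟩

theorem IsMatching.eq_of_mk_mem_of_mk_mem (hM : IsMatching H M) {x x' y : V}
    (hx : s(x, y) ∈ M) (hx' : s(x', y) ∈ M) : x = x' := by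
  have hxy : x ≠ y := (hM.1 hx).ne
  rcases Sym2.eq_iff.mp (hM.eq_of_mem_of_mem hx hx' (Sym2.mem_mk_right x y)
    (Sym2.mem_mk_right x' y)) with ⟨h, -⟩ | ⟨h, -⟩
  · exact h
  · exact absurd h hxy

theorem IsMatching.insert (hM : IsMatching H M) {a b : V} (hab : H.Adj a b)
    (ha : ¬ MatchCovers M a) (hb : ¬ MatchCovers M b) : IsMatching H (insert s(a, b) M) := by
  have hfree : ∀ e ∈ M, ∀ v ∈ s(a, b), v ∉ e := by
    intro e he v hv hve
    rcases Sym2.mem_iff.mp hv with rfl | rfl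
    exacts [ha ⟨e, he, hve⟩, hb ⟨e, he, hve⟩]
  refine ⟨Set.insert_subset hab hM.1, ?_⟩
  rintro e (rfl | he) f (rfl | hf) hne v ⟨hve, hvf⟩
  · exact hne rfl
  · exact hfree f hf v hve hvf
  · exact hfree e he v hvf hve
  · exact hM.2 e he f hf hne v ⟨hve, hvf⟩

theorem IsMaximalMatching.matchCovers_or_matchCovers (hM : IsMaximalMatching H M) {a b : V}
    (hab : H.Adj a b) : MatchCovers M a ∨ MatchCovers M b := by
  by_contra! h
  have hins : insert s(a, b) M = M := hM.2 _ (hM.1.insert hab h.1 h.2) (Set.subset_insert _ _)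
  exact h.1 ⟨s(a, b), hins ▸ Set.mem_insert _ _, Sym2.mem_mk_left a b⟩

theorem IsMatching.exists_isMaximalMatching_superset [Finite V] (hM : IsMatching H M) :
    ∃ M', IsMaximalMatching H M' ∧ M ⊆ M' := by
  have hfin : {T | IsMatching H T ∧ M ⊆ T}.Finite :=
    H.edgeSet.toFinite.finite_subsets.subset fun T hT => hT.1.1
  obtain ⟨M', ⟨hM', hMM'⟩, hmax⟩ := hfin.exists_maximalFor id _ ⟨M, hM, subset_rfl⟩
  exact ⟨M', ⟨hM', fun T hT hM'T =>
    (hmax (j := T) ⟨hT, hMM'.trans hM'T⟩ hM'T).antisymm hM'T⟩, hMM'⟩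

theorem IsMatching.ncard_le_ncard_of_forall_exists_mk_mem (hM : IsMatching H M) {X S : Set V}
    (hS : S.Finite) (hX : ∀ x ∈ X, ∃ y ∈ S, s(x, y) ∈ M) : X.ncard ≤ S.ncard := by
  choose! f hfS hfM using hX
  exact Set.ncard_le_ncard_of_injOn f hfS
    (fun x hx x' hx' hff => hM.eq_of_mk_mem_of_mk_mem (hfM x hx) (hff ▸ hfM x' hx')) hS

theorem isMatching_range_of_injective {A : Set V} {f : A → V} (hf : f.Injective)
    (hfA : ∀ a : A, f a ∉ A) (hadj : ∀ a : A, H.Adj a (f a)) :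
    IsMatching H (Set.range fun a : A => s(↑a, f a)) := by
  refine ⟨Set.range_subset_iff.mpr hadj, ?_⟩
  rintro _ ⟨a, rfl⟩ _ ⟨b, rfl⟩ hne v ⟨hva, hvb⟩
  apply hne
  by_cases hv : v ∈ A
  · have hva : v = a := (Sym2.mem_iff.mp hva).resolve_right fun h => hfA a (h ▸ hv)
    have hvb : v = b := (Sym2.mem_iff.mp hvb).resolve_right fun h => hfA b (h ▸ hv)
    rw [Subtype.ext (hva.symm.trans hvb)]
  · have hva : v = f a := (Sym2.mem_iff.mp hva).resolve_left fun h => hv (h ▸ a.2)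
    have hvb : v = f b := (Sym2.mem_iff.mp hvb).resolve_left fun h => hv (h ▸ b.2)
    rw [hf (hva.symm.trans hvb)]

theorem SimpleGraph.IsBipartiteWith.isIndepSet_neighborSet {s t : Set V}
    (h : H.IsBipartiteWith s t) (u : V) : H.IsIndepSet (H.neighborSet u) := by
  have key : ∀ {s t : Set V}, H.IsBipartiteWith s t → u ∈ s →
      H.IsIndepSet (H.neighborSet u) := by
    intro s t h hu x hx y hy _ hxy
    exact Set.disjoint_left.mp h.disjoint (h.mem_of_mem_adj' (h.mem_of_mem_adj hu hy) hxy)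
      (h.mem_of_mem_adj hu hx)
  intro x hx y hy
  rcases h.mem_of_adj hx with ⟨hu, -⟩ | ⟨hu, -⟩
  · exact key h hu hx hy
  · exact key h.symm hu hx hy

def SimpleGraph.outerNeighborSet (H : SimpleGraph V) (X : Set V) : Set V :=
  {y | y ∉ X ∧ ∃ x ∈ X, H.Adj x y}

theorem SimpleGraph.mem_outerNeighborSet_of_subset_neighborSet {X : Set V} (hne : X.Nonempty)
    (hX : X ⊆ H.neighborSet u) : u ∈ H.outerNeighborSet X :=
  ⟨fun hu => H.loopless.irrefl u (hX hu), hne.some, hne.some_mem, (hX hne.some_mem).symm⟩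

theorem not_strongVertex_iff [Finite V] :
    ¬ StrongVertex H u ↔
      ∃ M, IsMatching H M ∧ ¬ MatchCovers M u ∧ ∀ x, H.Adj u x → MatchCovers M x := by
  constructor
  · intro h
    obtain ⟨M, hM, hu⟩ : ∃ M, IsMaximalMatching H M ∧ ¬ MatchCovers M u := by
      simpa [StrongVertex] using h
    exact ⟨M, hM.1, hu, fun x hx => (hM.matchCovers_or_matchCovers hx).resolve_left hu⟩
  · rintro ⟨M, hM, hu, hsat⟩ hstrong
    obtain ⟨M', hM', hMM'⟩ := hM.exists_isMaximalMatching_superset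
    obtain ⟨e, he, hue⟩ := hstrong M' hM'
    obtain ⟨x, rfl⟩ := Sym2.mem_iff_exists.mp hue
    obtain ⟨f, hf, hxf⟩ := hsat x (hM'.1.1 he)
    have hef : s(u, x) = f := hM'.1.eq_of_mem_of_mem he (hMM' hf) (Sym2.mem_mk_right u x) hxf
    exact hu ⟨f, hf, hef ▸ Sym2.mem_mk_left u x⟩

theorem IsMatching.ncard_lt_ncard_outerNeighborSet [Finite V]
    (hind : H.IsIndepSet (H.neighborSet u)) (hM : IsMatching H M) (hu : ¬ MatchCovers M u)
    (hsat : ∀ x, H.Adj u x → MatchCovers M x) {X : Set V} (hne : X.Nonempty)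
    (hX : X ⊆ H.neighborSet u) : X.ncard < (H.outerNeighborSet X).ncard := by
  have hmatched : ∀ x ∈ X, ∃ y ∈ H.outerNeighborSet X \ {u}, s(x, y) ∈ M := by
    intro x hx
    obtain ⟨e, he, hxe⟩ := hsat x (hX hx)
    obtain ⟨y, rfl⟩ := Sym2.mem_iff_exists.mp hxe
    have hxy : H.Adj x y := hM.1 he
    refine ⟨y, ⟨⟨fun hy => hind (hX hx) (hX hy) hxy.ne hxy, x, hx, hxy⟩, fun hyu => ?_⟩, he⟩
    exact hu ⟨_, he, hyu ▸ Sym2.mem_mk_right x y⟩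
  have hle := hM.ncard_le_ncard_of_forall_exists_mk_mem (Set.toFinite _) hmatched
  have := Set.ncard_sdiff_singleton_add_one
    (mem_outerNeighborSet_of_subset_neighborSet hne hX) (Set.toFinite _)
  omega

theorem exists_isMatching_of_forall_ncard_lt [Fintype V]
    (hind : H.IsIndepSet (H.neighborSet u))
    (hall : ∀ X : Set V, X.Nonempty → X ⊆ H.neighborSet u →
      X.ncard < (H.outerNeighborSet X).ncard) :
    ∃ M, IsMatching H M ∧ ¬ MatchCovers M u ∧ ∀ x, H.Adj u x → MatchCovers M x := by
  classical
  have hallCondition : ∀ A : Finset (H.neighborSet u),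
      A.card ≤ ({y | ∃ a ∈ A, H.Adj a y ∧ y ≠ u} : Finset V).card := by
    intro A
    rcases A.eq_empty_or_nonempty with rfl | hA
    · simp
    set X : Set V := Subtype.val '' (A : Set (H.neighborSet u))
    have hXne : X.Nonempty := hA.to_set.image _
    have hXu : X ⊆ H.neighborSet u := by rintro _ ⟨x, -, rfl⟩; exact x.2
    have hXA : X.ncard = A.card := by
      rw [Set.ncard_image_of_injective _ Subtype.val_injective, Set.ncard_coe_finset]
    have hsub : H.outerNeighborSet X \ {u} ⊆
        ↑({y | ∃ a ∈ A, H.Adj a y ∧ y ≠ u} : Finset V) := by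
      rintro y ⟨⟨-, _, ⟨a, ha, rfl⟩, hay⟩, hyu⟩
      exact Finset.mem_filter.mpr ⟨Finset.mem_univ _, a, ha, hay, hyu⟩
    have hle := Set.ncard_le_ncard hsub
    have hu := Set.ncard_sdiff_singleton_add_one
      (mem_outerNeighborSet_of_subset_neighborSet hXne hXu) (Set.toFinite _)
    have hlt := hall X hXne hXu
    rw [Set.ncard_coe_finset] at hle
    omega
  obtain ⟨f, hf, hfadj⟩ := (Fintype.all_card_le_filter_rel_iff_exists_injective _).mp hallCondition
  have hfA : ∀ x, f x ∉ H.neighborSet u := fun x hfx =>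
    hind x.2 hfx (hfadj x).1.ne (hfadj x).1
  refine ⟨_, isMatching_range_of_injective hf hfA fun x => (hfadj x).1, ?_,
    fun x hx => ⟨_, ⟨⟨x, hx⟩, rfl⟩, Sym2.mem_mk_left _ _⟩⟩
  rintro ⟨_, ⟨x, rfl⟩, hu⟩
  rcases Sym2.mem_iff.mp hu with h | h
  · exact H.ne_of_adj x.2 h
  · exact (hfadj x).2 h.symm

end

theorem strong_vertex_iff_hall_condition_general (H : SimpleGraph V) (U W : Set V)
    (hdisj : Disjoint U W)
    (hbip : ∀ x y, H.Adj x y → (x ∈ U ∧ y ∈ W) ∨ (x ∈ W ∧ y ∈ U)) (u : V) :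
    StrongVertex H u ↔
      ∃ X : Set V, X.Nonempty ∧ X ⊆ {y | H.Adj u y} ∧
        {y | y ∉ X ∧ ∃ x ∈ X, H.Adj x y}.ncard ≤ X.ncard := by
  have hind : H.IsIndepSet (H.neighborSet u) :=
    (⟨hdisj, fun x y h => hbip x y h⟩ : H.IsBipartiteWith U W).isIndepSet_neighborSet u
  rw [← not_iff_not, not_strongVertex_iff]
  constructor
  · rintro ⟨M, hM, hu, hsat⟩ ⟨X, hne, hX, hle⟩
    exact (hM.ncard_lt_ncard_outerNeighborSet hind hu hsat hne hX).not_ge hle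
  · exact fun h => exists_isMatching_of_forall_ncard_lt hind fun X hne hX =>
      not_le.mp fun hle => h ⟨X, hne, hX, hle⟩

theorem strong_vertex_iff_hall_condition (H : SimpleGraph V) (U W : Set V)
    (hdisj : Disjoint U W) (hcover : U ∪ W = Set.univ)
    (hbip : ∀ x y, H.Adj x y → (x ∈ U ∧ y ∈ W) ∨ (x ∈ W ∧ y ∈ U)) (u : V) :
    StrongVertex H u ↔
      ∃ X : Set V, X.Nonempty ∧ X ⊆ {y | H.Adj u y} ∧
        {y | y ∉ X ∧ ∃ x ∈ X, H.Adj x y}.ncard ≤ X.ncard :=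
  strong_vertex_iff_hall_condition_general H U W hdisj hbip u
end

section
/- Let G be the corona of an odd cycle C of length at least 5, obtained by attaching a pendant vertex to each vertex of C. Then G is localizable and co-well-covered (all maximal cliques of G have size 2), but G has no strong independent set (equivalently, the complement of G has no strong clique). -/
variable {W : Type*}

/-- `S` is an independent set in `G`. -/
def IsIndepSet (G : SimpleGraph W) (S : Set W) : Prop :=
  ∀ u ∈ S, ∀ v ∈ S, ¬ G.Adj u v

/-- `S` is a maximal independent set in `G`. -/
def MaxIndepSet (G : SimpleGraph W) (S : Set W) : Prop :=
  IsIndepSet G S ∧ ∀ T, IsIndepSet G T → S ⊆ T → T = S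

/-- `K` is a strong clique in `G`: a clique meeting every maximal independent set. -/
def StrongCliqueSet (G : SimpleGraph W) (K : Set W) : Prop :=
  G.IsClique K ∧ ∀ S, MaxIndepSet G S → (K ∩ S).Nonempty

/-- `G` is localizable: its vertex set partitions into strong cliques. -/
def LocalizableSet (G : SimpleGraph W) : Prop :=
  ∃ P : Set (Set W), (∀ K ∈ P, StrongCliqueSet G K) ∧ ∀ v, ∃! K, K ∈ P ∧ v ∈ K

/-- `K` is a maximal clique in `G`. -/
def MaxCliqueSet (G : SimpleGraph W) (K : Set W) : Prop :=
  G.IsClique K ∧ ∀ K', G.IsClique K' → K ⊆ K' → K' = K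

/-- The corona of the cycle of length `m`: vertices `inl i` form a cycle
`inl i ~ inl (i+1)`, and each cycle vertex `inl i` has a pendant vertex `inr i`. -/
def cycleCorona (m : ℕ) : SimpleGraph (ZMod m ⊕ ZMod m) :=
  SimpleGraph.fromRel (fun x y =>
    match x, y with
    | .inl i, .inl j => j = i + 1
    | .inl i, .inr j => i = j
    | _, _ => False)

/-!
Every maximal clique of the corona is an edge, because the corona of a cycle of length at
least four is triangle-free and has no isolated vertex. Each pair `{vᵢ, vᵢ'}` is the closed
neighbourhood of the pendant vertex `vᵢ'`, and a closed neighbourhood meets every maximal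
independent set, so these pairs partition the vertices into strong cliques. Finally, an
independent set meeting every maximal clique contains exactly one end of each cycle edge,
i.e. it properly 2-colours the odd cycle, which is impossible.
-/

section Graphs

variable {G : SimpleGraph W} {K S : Set W} {u v : W}

theorem SimpleGraph.IsClique.eq_pair_of_cliqueFree_three (hG : G.CliqueFree 3)
    (hK : G.IsClique K) (hu : u ∈ K) (hv : v ∈ K) (huv : u ≠ v) : K = {u, v} := by
  classical
  refine Set.Subset.antisymm (fun w hw => ?_) (Set.pair_subset hu hv)
  by_contra hne
  simp only [Set.mem_insert_iff, Set.mem_singleton_iff, not_or] at hne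
  exact hG {u, v, w} (SimpleGraph.is3Clique_triple_iff.2
    ⟨hK hu hv huv, hK hu hw (Ne.symm hne.1), hK hv hw (Ne.symm hne.2)⟩)

theorem maxCliqueSet_pair (hG : G.CliqueFree 3) (h : G.Adj u v) : MaxCliqueSet G {u, v} :=
  ⟨SimpleGraph.isClique_pair.2 fun _ => h, fun _ hK' hsub =>
    hK'.eq_pair_of_cliqueFree_three hG (hsub (by simp)) (hsub (by simp)) h.ne⟩

theorem MaxCliqueSet.ncard_eq_two [Nonempty W] (hG : G.CliqueFree 3)
    (hadj : ∀ v, ∃ w, G.Adj v w) (hK : MaxCliqueSet G K) : K.ncard = 2 := by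
  obtain ⟨hcl, hmax⟩ := hK
  obtain ⟨u, hu⟩ : K.Nonempty := by
    by_contra hempty
    obtain rfl := Set.not_nonempty_iff_eq_empty.1 hempty
    obtain ⟨x⟩ := ‹Nonempty W›
    exact Set.singleton_ne_empty x
      (hmax {x} (SimpleGraph.isClique_singleton x) (Set.empty_subset _))
  by_cases hother : ∃ v ∈ K, v ≠ u
  · obtain ⟨v, hv, hvu⟩ := hother
    rw [hcl.eq_pair_of_cliqueFree_three hG hu hv hvu.symm, Set.ncard_pair hvu.symm]
  · push Not at hother
    obtain ⟨w, huw⟩ := hadj u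
    have hKuw := hmax {u, w} (SimpleGraph.isClique_pair.2 fun _ => huw)
      fun v hv => hother v hv ▸ Set.mem_insert v _
    exact absurd (hother w (hKuw ▸ Set.mem_insert_of_mem u rfl)) huw.ne.symm

theorem MaxIndepSet.exists_adj_of_notMem (hS : MaxIndepSet G S) (hv : v ∉ S) :
    ∃ w ∈ S, G.Adj v w := by
  by_contra! hnone
  refine hv (hS.2 (insert v S) ?_ (Set.subset_insert v S) ▸ Set.mem_insert v S)
  rintro x (rfl | hx) y (rfl | hy) hxy
  · exact G.irrefl hxy
  · exact hnone y hy hxy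
  · exact hnone x hx hxy.symm
  · exact hS.1 x hx y hy hxy

theorem strongCliqueSet_pair_of_pendant (huv : G.Adj u v) (hv : ∀ w, G.Adj v w → w = u) :
    StrongCliqueSet G {u, v} := by
  refine ⟨SimpleGraph.isClique_pair.2 fun _ => huv, fun S hS => ?_⟩
  by_cases hvS : v ∈ S
  · exact ⟨v, Set.mem_insert_of_mem u rfl, hvS⟩
  · obtain ⟨w, hwS, hvw⟩ := hS.exists_adj_of_notMem hvS
    exact ⟨u, Set.mem_insert u _, hv w hvw ▸ hwS⟩

theorem localizableSet_of_fibers {ι : Type*} (p : W → ι)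
    (h : ∀ v, StrongCliqueSet G (p ⁻¹' {p v})) : LocalizableSet G := by
  refine ⟨Set.range fun v => p ⁻¹' {p v}, ?_, fun v => ⟨p ⁻¹' {p v}, ⟨⟨v, rfl⟩, rfl⟩, ?_⟩⟩
  · rintro _ ⟨v, rfl⟩
    exact h v
  · rintro _ ⟨⟨w, rfl⟩, hv⟩
    rw [Set.mem_preimage, Set.mem_singleton_iff] at hv
    rw [hv]

end Graphs

theorem ZMod.not_forall_add_one_iff_not {m : ℕ} (hodd : Odd m) (P : ZMod m → Prop) :
    ¬ ∀ i, P (i + 1) ↔ ¬ P i := by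
  intro h
  have hparity : ∀ k : ℕ, P k ↔ (P 0 ↔ Even k) := by
    intro k
    induction k with
    | zero => simp
    | succ k ih =>
      rw [Nat.cast_succ, h, ih, Nat.even_add_one]
      tauto
  have := hparity m
  rw [ZMod.natCast_self, iff_false_intro (Nat.not_even_iff_odd.2 hodd)] at this
  tauto

namespace cycleCorona

variable {m : ℕ} {i j : ZMod m}

@[simp] theorem adj_inl_inl :
    (cycleCorona m).Adj (.inl i) (.inl j) ↔ i ≠ j ∧ (j = i + 1 ∨ i = j + 1) := by
  simp [cycleCorona]

@[simp] theorem adj_inl_inr : (cycleCorona m).Adj (.inl i) (.inr j) ↔ i = j := by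
  simp [cycleCorona]

@[simp] theorem adj_inr_inl : (cycleCorona m).Adj (.inr i) (.inl j) ↔ i = j := by
  simp [cycleCorona, eq_comm]

@[simp] theorem not_adj_inr_inr : ¬ (cycleCorona m).Adj (.inr i) (.inr j) := by
  simp [cycleCorona]

/-- A pendant vertex lies on no triangle, and a triangle on the cycle would give
`±1 ± 1 ± 1 = 0`, i.e. `3 = 0` or `1 = 0`, in `ZMod m`. -/
theorem cliqueFree_three (h3 : (3 : ZMod m) ≠ 0) : (cycleCorona m).CliqueFree 3 := by
  intro t ht
  obtain ⟨a, b, c, hab, hac, hbc, -⟩ := SimpleGraph.is3Clique_iff.1 ht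
  obtain i | i := a <;> obtain j | j := b <;> obtain k | k := c <;>
    simp only [adj_inl_inl, adj_inl_inr, adj_inr_inl, not_adj_inr_inr] at hab hac hbc <;>
    grind

theorem adj_inl_inl_add_one [Nontrivial (ZMod m)] (i : ZMod m) :
    (cycleCorona m).Adj (.inl i) (.inl (i + 1)) :=
  adj_inl_inl.2 ⟨by simp, .inl rfl⟩

theorem exists_adj : ∀ v, ∃ w, (cycleCorona m).Adj v w
  | .inl i => ⟨.inr i, adj_inl_inr.2 rfl⟩
  | .inr i => ⟨.inl i, adj_inr_inl.2 rfl⟩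

theorem strongCliqueSet_inl_inr (i : ZMod m) :
    StrongCliqueSet (cycleCorona m) {.inl i, .inr i} :=
  strongCliqueSet_pair_of_pendant (adj_inl_inr.2 rfl) fun
    | .inl _, hw => by rw [adj_inr_inl.1 hw]
    | .inr _, hw => absurd hw not_adj_inr_inr

theorem localizableSet : LocalizableSet (cycleCorona m) :=
  localizableSet_of_fibers (Sum.elim id id) fun v => by
    convert strongCliqueSet_inl_inr (Sum.elim id id v) using 1
    ext (j | j) <;> simp [eq_comm]

theorem not_exists_isIndepSet_meets_maxCliqueSet (hodd : Odd m) (h3 : (3 : ZMod m) ≠ 0) :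
    ¬ ∃ S : Set (ZMod m ⊕ ZMod m), IsIndepSet (cycleCorona m) S ∧
        ∀ K, MaxCliqueSet (cycleCorona m) K → (S ∩ K).Nonempty := by
  rintro ⟨S, hS, hmeet⟩
  have : Nontrivial (ZMod m) := ⟨⟨3, 0, h3⟩⟩
  refine ZMod.not_forall_add_one_iff_not hodd (fun i => Sum.inl i ∈ S) fun i => ⟨?_, ?_⟩
  · exact fun hsucc hi => hS _ hi _ hsucc (adj_inl_inl_add_one i)
  · intro hi
    obtain ⟨x, hxS, rfl | rfl⟩ :=
      hmeet _ (maxCliqueSet_pair (cliqueFree_three h3) (adj_inl_inl_add_one i))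
    exacts [absurd hxS hi, hxS]

end cycleCorona

theorem corona_of_odd_cycle_counterexample (m : ℕ) (hm : 5 ≤ m) (hodd : Odd m) :
    LocalizableSet (cycleCorona m) ∧
      (∀ K : Set (ZMod m ⊕ ZMod m), MaxCliqueSet (cycleCorona m) K → K.ncard = 2) ∧
      ¬ ∃ S : Set (ZMod m ⊕ ZMod m), IsIndepSet (cycleCorona m) S ∧
          ∀ K, MaxCliqueSet (cycleCorona m) K → (S ∩ K).Nonempty := by
  have h3 : (3 : ZMod m) ≠ 0 := by
    rw [Ne, ← Nat.cast_ofNat, ZMod.natCast_eq_zero_iff]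
    exact fun hdvd => absurd (Nat.le_of_dvd (by norm_num) hdvd) (by omega)
  exact ⟨cycleCorona.localizableSet,
    fun K hK => hK.ncard_eq_two (cycleCorona.cliqueFree_three h3) cycleCorona.exists_adj,
    cycleCorona.not_exists_isIndepSet_meets_maxCliqueSet hodd h3⟩
end
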